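/- (Cramér's theorem, LDP upper bound) Let X_1, X_2, … be i.i.d. real random variables whose common logarithmic moment generating function Λ(t) = log E[exp(t X_1)] is finite for all t ∈ ℝ, and let I(x) = sup_{t ∈ ℝ} (t x − Λ(t)) be the Cramér rate function. Then for every closed set C ⊆ ℝ, limsup_{n → ∞} (1/n) log P((X_1 + ⋯ + X_n)/n ∈ C) ≤ −inf_{x ∈ C} I(x). -/

import Mathlib

/-!
Chernoff's bound for the sum of `n` i.i.d. copies reads
`P(S_n ≥ n x) ≤ exp (-n (t x - Λ t))` for `t ≥ 0`, and symmetrically for the lower tail with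
`t ≤ 0`. By Jensen, `t m ≤ Λ t` where `m` is the mean, so for `x ≥ m` the supremum defining
`I x` may be restricted to `t ≥ 0` (and to `t ≤ 0` for `x ≤ m`). A closed set `C` lies outside
the open interval `(sup (C ∩ (-∞, m]), inf (C ∩ [m, ∞)))`, whose endpoints belong to `C`, so
`P(S_n / n ∈ C) ≤ 2 exp (-n s)` for every `0 ≤ s < inf_C I`, and the limsup is at most `-s`.
-/

open MeasureTheory ProbabilityTheory Filter Topology
open scoped ENNReal

/-- The Cramér rate function `I(x) = ⨆ t, (t x - Λ(t))`, as a function `ℝ → [0, ∞] ⊆ EReal`,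
where `Λ = cgf X μ` is the logarithmic moment generating function `t ↦ log E[exp (t X)]`. -/
noncomputable def cramerRate {Ω : Type*} [MeasurableSpace Ω] (X : Ω → ℝ) (μ : Measure Ω)
    (x : ℝ) : EReal :=
  ⨆ t : ℝ, ((t * x - cgf X μ t : ℝ) : EReal)

lemma EReal.le_neg_of_forall_coe_lt {x r : EReal} (h : ∀ s : ℝ, (s : EReal) < r → x ≤ -s) :
    x ≤ -r := by
  refine EReal.le_neg_of_le_neg (not_lt.1 fun hlt => ?_)
  obtain ⟨s, hxs, hsr⟩ := EReal.exists_between_coe_real hlt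
  exact hxs.not_ge (EReal.le_neg_of_le_neg (h s hsr))

lemma limsup_inv_mul_log_le_of_le_mul_exp {u : ℕ → ℝ≥0∞} {c s : ℝ} (hc : 0 < c)
    (hu : ∀ᶠ n : ℕ in atTop, u n ≤ ENNReal.ofReal (c * Real.exp (-(n * s)))) :
    limsup (fun n : ℕ => (((n : ℝ)⁻¹ : ℝ) : EReal) * ENNReal.log (u n)) atTop ≤ -(s : EReal) := by
  have hbound : ∀ᶠ n : ℕ in atTop, (((n : ℝ)⁻¹ : ℝ) : EReal) * ENNReal.log (u n) ≤
      (((n : ℝ)⁻¹ * Real.log c - s : ℝ) : EReal) := by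
    filter_upwards [hu, eventually_gt_atTop 0] with n hn hn0
    have hlog : ENNReal.log (u n) ≤ ((Real.log c - n * s : ℝ) : EReal) := by
      refine (ENNReal.log_monotone hn).trans_eq ?_
      rw [ENNReal.log_ofReal_of_pos (by positivity), Real.log_mul hc.ne' (Real.exp_ne_zero _),
        Real.log_exp, sub_eq_add_neg]
    refine (mul_le_mul_of_nonneg_left hlog (EReal.coe_nonneg.2 (by positivity))).trans_eq ?_
    rw [← EReal.coe_mul]
    congr 1
    field_simp
  have hlim : Tendsto (fun n : ℕ => (((n : ℝ)⁻¹ * Real.log c - s : ℝ) : EReal)) atTop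
      (𝓝 (-(s : EReal))) := by
    rw [← EReal.coe_neg]
    refine (continuous_coe_real_ereal.tendsto _).comp ?_
    simpa using (tendsto_inv_atTop_nhds_zero_nat.mul_const (Real.log c)).sub_const s
  exact (limsup_le_limsup hbound).trans_eq hlim.limsup_eq

section Cgf

variable {Ω : Type*} [MeasurableSpace Ω] {μ : Measure Ω} {Y : Ω → ℝ}

lemma integrable_of_forall_integrable_exp_mul
    (hfin : ∀ t : ℝ, Integrable (fun ω => Real.exp (t * Y ω)) μ) : Integrable Y μ := by
  simpa using integrable_pow_of_integrable_exp_mul one_ne_zero (hfin 1) (hfin (-1)) 1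

lemma mul_integral_le_cgf [IsProbabilityMeasure μ] {t : ℝ} (hY : Integrable Y μ)
    (ht : Integrable (fun ω => Real.exp (t * Y ω)) μ) : t * μ[Y] ≤ cgf Y μ t := by
  have hjensen := convexOn_exp.map_integral_le (f := fun ω => t * Y ω)
    Real.continuous_exp.continuousOn isClosed_univ (ae_of_all _ fun ω => Set.mem_univ _)
    (hY.const_mul t) ht
  rw [integral_const_mul] at hjensen
  exact (Real.le_log_iff_exp_le (mgf_pos ht)).2 hjensen

lemma exists_nonneg_lt_of_lt_cramerRate [IsProbabilityMeasure μ] {x s : ℝ}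
    (hfin : ∀ t : ℝ, Integrable (fun ω => Real.exp (t * Y ω)) μ) (hx : μ[Y] ≤ x) (hs : 0 ≤ s)
    (hsx : (s : EReal) < cramerRate Y μ x) : ∃ t, 0 ≤ t ∧ s < t * x - cgf Y μ t := by
  obtain ⟨t, ht⟩ := lt_iSup_iff.1 hsx
  refine ⟨t, not_lt.1 fun ht0 => ?_, EReal.coe_lt_coe_iff.1 ht⟩
  have := EReal.coe_lt_coe_iff.1 ht
  nlinarith [mul_integral_le_cgf (integrable_of_forall_integrable_exp_mul hfin) (hfin t)]

lemma exists_nonpos_lt_of_lt_cramerRate [IsProbabilityMeasure μ] {x s : ℝ}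
    (hfin : ∀ t : ℝ, Integrable (fun ω => Real.exp (t * Y ω)) μ) (hx : x ≤ μ[Y]) (hs : 0 ≤ s)
    (hsx : (s : EReal) < cramerRate Y μ x) : ∃ t, t ≤ 0 ∧ s < t * x - cgf Y μ t := by
  obtain ⟨t, ht⟩ := lt_iSup_iff.1 hsx
  refine ⟨t, not_lt.1 fun ht0 => ?_, EReal.coe_lt_coe_iff.1 ht⟩
  have := EReal.coe_lt_coe_iff.1 ht
  nlinarith [mul_integral_le_cgf (integrable_of_forall_integrable_exp_mul hfin) (hfin t)]

end Cgf

section IID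

variable {Ω : Type*} [MeasurableSpace Ω] {μ : Measure Ω} {X : ℕ → Ω → ℝ}

lemma integrable_exp_mul_of_identDistrib (hident : ∀ i, IdentDistrib (X i) (X 0) μ μ) {t : ℝ}
    (ht : Integrable (fun ω => Real.exp (t * X 0 ω)) μ) (i : ℕ) :
    Integrable (fun ω => Real.exp (t * X i ω)) μ :=
  ((hident i).comp (measurable_const_mul t).exp).integrable_iff.2 ht

lemma cgf_sum_range_of_identDistrib (hmeas : ∀ i, Measurable (X i)) (hindep : iIndepFun X μ)
    (hident : ∀ i, IdentDistrib (X i) (X 0) μ μ) (n : ℕ) (t : ℝ) :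
    cgf (∑ i ∈ Finset.range n, X i) μ t = n * cgf (X 0) μ t := by
  rw [cgf, hindep.mgf_sum hmeas, Finset.prod_congr rfl fun i _ =>
    mgf_congr_of_identDistrib (X i) (X 0) (hident i) t, Finset.prod_const, Finset.card_range,
    Real.log_pow, cgf]

lemma measure_sum_range_ge_le_exp [IsFiniteMeasure μ] (hmeas : ∀ i, Measurable (X i))
    (hindep : iIndepFun X μ) (hident : ∀ i, IdentDistrib (X i) (X 0) μ μ) {t : ℝ}
    (ht_int : Integrable (fun ω => Real.exp (t * X 0 ω)) μ) (ht : 0 ≤ t) (n : ℕ) (x : ℝ) :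
    μ {ω | n * x ≤ ∑ i ∈ Finset.range n, X i ω} ≤
      ENNReal.ofReal (Real.exp (-(n * (t * x - cgf (X 0) μ t)))) := by
  have hchernoff := measure_ge_le_exp_cgf (n * x) ht
    (hindep.integrable_exp_mul_sum hmeas (s := Finset.range n) fun i _ =>
      integrable_exp_mul_of_identDistrib hident ht_int i)
  rw [cgf_sum_range_of_identDistrib hmeas hindep hident] at hchernoff
  simp only [Finset.sum_apply] at hchernoff
  refine (ENNReal.le_ofReal_iff_toReal_le (measure_ne_top μ _) (Real.exp_pos _).le).2 ?_
  exact hchernoff.trans_eq (by ring_nf)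

lemma measure_sum_range_le_le_exp [IsFiniteMeasure μ] (hmeas : ∀ i, Measurable (X i))
    (hindep : iIndepFun X μ) (hident : ∀ i, IdentDistrib (X i) (X 0) μ μ) {t : ℝ}
    (ht_int : Integrable (fun ω => Real.exp (t * X 0 ω)) μ) (ht : t ≤ 0) (n : ℕ) (x : ℝ) :
    μ {ω | ∑ i ∈ Finset.range n, X i ω ≤ n * x} ≤
      ENNReal.ofReal (Real.exp (-(n * (t * x - cgf (X 0) μ t)))) := by
  have hchernoff := measure_le_le_exp_cgf (n * x) ht
    (hindep.integrable_exp_mul_sum hmeas (s := Finset.range n) fun i _ =>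
      integrable_exp_mul_of_identDistrib hident ht_int i)
  rw [cgf_sum_range_of_identDistrib hmeas hindep hident] at hchernoff
  simp only [Finset.sum_apply] at hchernoff
  refine (ENNReal.le_ofReal_iff_toReal_le (measure_ne_top μ _) (Real.exp_pos _).le).2 ?_
  exact hchernoff.trans_eq (by ring_nf)

lemma measure_mean_mem_le_exp_of_subset_Ici [IsProbabilityMeasure μ]
    (hmeas : ∀ i, Measurable (X i)) (hindep : iIndepFun X μ)
    (hident : ∀ i, IdentDistrib (X i) (X 0) μ μ)
    (hfin : ∀ t : ℝ, Integrable (fun ω => Real.exp (t * X 0 ω)) μ)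
    {K : Set ℝ} (hK : IsClosed K) (hKm : K ⊆ Set.Ici μ[X 0]) {s : ℝ} (hs : 0 ≤ s)
    (hsK : ∀ x ∈ K, (s : EReal) < cramerRate (X 0) μ x) {n : ℕ} (hn : 0 < n) :
    μ {ω | (∑ i ∈ Finset.range n, X i ω) / (n : ℝ) ∈ K} ≤
      ENNReal.ofReal (Real.exp (-(n * s))) := by
  rcases K.eq_empty_or_nonempty with rfl | hKne
  · simp
  have hbdd : BddBelow K := ⟨_, hKm⟩
  have hb : sInf K ∈ K := hK.csInf_mem hKne hbdd
  obtain ⟨t, ht0, hst⟩ := exists_nonneg_lt_of_lt_cramerRate hfin (hKm hb) hs (hsK _ hb)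
  calc μ {ω | (∑ i ∈ Finset.range n, X i ω) / (n : ℝ) ∈ K}
      ≤ μ {ω | n * sInf K ≤ ∑ i ∈ Finset.range n, X i ω} := by
        refine measure_mono fun ω hω => ?_
        rw [Set.mem_ofPred_eq, ← le_div_iff₀' (by positivity)]
        exact csInf_le hbdd hω
    _ ≤ ENNReal.ofReal (Real.exp (-(n * (t * sInf K - cgf (X 0) μ t)))) :=
        measure_sum_range_ge_le_exp hmeas hindep hident (hfin t) ht0 n _
    _ ≤ ENNReal.ofReal (Real.exp (-(n * s))) := by gcongr

lemma measure_mean_mem_le_exp_of_subset_Iic [IsProbabilityMeasure μ]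
    (hmeas : ∀ i, Measurable (X i)) (hindep : iIndepFun X μ)
    (hident : ∀ i, IdentDistrib (X i) (X 0) μ μ)
    (hfin : ∀ t : ℝ, Integrable (fun ω => Real.exp (t * X 0 ω)) μ)
    {K : Set ℝ} (hK : IsClosed K) (hKm : K ⊆ Set.Iic μ[X 0]) {s : ℝ} (hs : 0 ≤ s)
    (hsK : ∀ x ∈ K, (s : EReal) < cramerRate (X 0) μ x) {n : ℕ} (hn : 0 < n) :
    μ {ω | (∑ i ∈ Finset.range n, X i ω) / (n : ℝ) ∈ K} ≤
      ENNReal.ofReal (Real.exp (-(n * s))) := by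
  rcases K.eq_empty_or_nonempty with rfl | hKne
  · simp
  have hbdd : BddAbove K := ⟨_, hKm⟩
  have ha : sSup K ∈ K := hK.csSup_mem hKne hbdd
  obtain ⟨t, ht0, hst⟩ := exists_nonpos_lt_of_lt_cramerRate hfin (hKm ha) hs (hsK _ ha)
  calc μ {ω | (∑ i ∈ Finset.range n, X i ω) / (n : ℝ) ∈ K}
      ≤ μ {ω | ∑ i ∈ Finset.range n, X i ω ≤ n * sSup K} := by
        refine measure_mono fun ω hω => ?_
        rw [Set.mem_ofPred_eq, ← div_le_iff₀' (by positivity)]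
        exact le_csSup hbdd hω
    _ ≤ ENNReal.ofReal (Real.exp (-(n * (t * sSup K - cgf (X 0) μ t)))) :=
        measure_sum_range_le_le_exp hmeas hindep hident (hfin t) ht0 n _
    _ ≤ ENNReal.ofReal (Real.exp (-(n * s))) := by gcongr

lemma measure_mean_mem_le_two_mul_exp [IsProbabilityMeasure μ]
    (hmeas : ∀ i, Measurable (X i)) (hindep : iIndepFun X μ)
    (hident : ∀ i, IdentDistrib (X i) (X 0) μ μ)
    (hfin : ∀ t : ℝ, Integrable (fun ω => Real.exp (t * X 0 ω)) μ)
    {C : Set ℝ} (hC : IsClosed C) {s : ℝ} (hs : 0 ≤ s)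
    (hsC : (s : EReal) < ⨅ x ∈ C, cramerRate (X 0) μ x) {n : ℕ} (hn : 0 < n) :
    μ {ω | (∑ i ∈ Finset.range n, X i ω) / (n : ℝ) ∈ C} ≤
      ENNReal.ofReal (2 * Real.exp (-(n * s))) := by
  have hsI : ∀ x ∈ C, (s : EReal) < cramerRate (X 0) μ x :=
    fun x hx => hsC.trans_le (iInf₂_le x hx)
  have hsplit : C = C ∩ Set.Iic μ[X 0] ∪ C ∩ Set.Ici μ[X 0] := by
    rw [← Set.inter_union_distrib_left, Set.Iic_union_Ici, Set.inter_univ]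
  calc μ {ω | (∑ i ∈ Finset.range n, X i ω) / (n : ℝ) ∈ C}
      ≤ μ {ω | (∑ i ∈ Finset.range n, X i ω) / (n : ℝ) ∈ C ∩ Set.Iic μ[X 0]} +
          μ {ω | (∑ i ∈ Finset.range n, X i ω) / (n : ℝ) ∈ C ∩ Set.Ici μ[X 0]} := by
        conv_lhs => rw [hsplit]
        exact measure_union_le _ _
    _ ≤ ENNReal.ofReal (Real.exp (-(n * s))) + ENNReal.ofReal (Real.exp (-(n * s))) := by
        gcongr
        · exact measure_mean_mem_le_exp_of_subset_Iic hmeas hindep hident hfin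
            (hC.inter isClosed_Iic) Set.inter_subset_right hs (fun x hx => hsI x hx.1) hn
        · exact measure_mean_mem_le_exp_of_subset_Ici hmeas hindep hident hfin
            (hC.inter isClosed_Ici) Set.inter_subset_right hs (fun x hx => hsI x hx.1) hn
    _ = ENNReal.ofReal (2 * Real.exp (-(n * s))) := by
        rw [← ENNReal.ofReal_add (by positivity) (by positivity), two_mul]

end IID

/-- Cramér's theorem, LDP upper bound: if `X 0, X 1, …` are i.i.d. real random variables whose
common logarithmic moment generating function is finite everywhere, then for every closed set
`C ⊆ ℝ`, `limsup_n (1/n) log P((X 0 + ⋯ + X (n-1))/n ∈ C) ≤ - inf_{x ∈ C} I x`, where `I` is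
the Cramér rate function (logarithms of probabilities are taken in `EReal` via `ENNReal.log`,
and the infimum over the empty set is `∞`). -/
theorem limsup_log_measure_mean_mem_closed_le {Ω : Type*} [MeasurableSpace Ω]
    (μ : Measure Ω) [IsProbabilityMeasure μ] (X : ℕ → Ω → ℝ)
    (hmeas : ∀ i, Measurable (X i))
    (hindep : iIndepFun X μ)
    (hident : ∀ i, IdentDistrib (X i) (X 0) μ μ)
    (hfin : ∀ t : ℝ, Integrable (fun ω => Real.exp (t * X 0 ω)) μ)
    (C : Set ℝ) (hC : IsClosed C) :
    limsup (fun n : ℕ =>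
        (((n : ℝ)⁻¹ : ℝ) : EReal) *
          ENNReal.log (μ {ω | (∑ i ∈ Finset.range n, X i ω) / (n : ℝ) ∈ C})) atTop ≤
      -(⨅ x ∈ C, cramerRate (X 0) μ x) := by
  refine EReal.le_neg_of_forall_coe_lt fun s hs => ?_
  rcases lt_or_ge s 0 with hs0 | hs0
  · have hprob : ∀ n : ℕ, μ {ω | (∑ i ∈ Finset.range n, X i ω) / (n : ℝ) ∈ C} ≤
        ENNReal.ofReal (1 * Real.exp (-(n * 0))) := fun n => by simpa using prob_le_one
    refine (limsup_inv_mul_log_le_of_le_mul_exp one_pos (Eventually.of_forall hprob)).trans ?_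
    exact_mod_cast neg_le_neg hs0.le
  · exact limsup_inv_mul_log_le_of_le_mul_exp two_pos ((eventually_gt_atTop 0).mono fun n hn =>
      measure_mean_mem_le_two_mul_exp hmeas hindep hident hfin hC hs0 hs hn)
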